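/- arXiv:2505.20234 — 7 statements merged into one kernel-verified Lean document; each statement's English description precedes it below -/
import Mathlib

section
/- Let H1 and H2 be ℂ-vector spaces, A a unital associative ℂ-algebra, N ≥ 1, and let Ψ1 : H1 → A, Ψ2 : H2 → A be ℂ-linear maps. Let T⁽¹⁾, S⁽¹⁾ be N×N matrices of ℂ-linear endomorphisms of H1, let T⁽²⁾, S⁽²⁾ be N×N matrices of ℂ-linear endomorphisms of H2, and let K be an N×N matrix with entries in A. Assume the KT-relation holds on each factor: for i = 1,2, all h ∈ Hi and all 1 ≤ a,b ≤ N, Σ_{c=1}^{N} K_{a,c} · Ψi(T⁽ⁱ⁾_{c,b} h) = Σ_{c=1}^{N} Ψi(S⁽ⁱ⁾_{a,c} h) · K_{c,b}. Define the ℂ-linear map Ψ : H1 ⊗ H2 → A on pure tensors by Ψ(h1 ⊗ h2) = Ψ2(h2) · Ψ1(h1), and define N×N matrices of endomorphisms of H1 ⊗ H2 by T_{a,b} = Σ_{c=1}^{N} (T⁽¹⁾_{c,b} ⊗ T⁽²⁾_{a,c}) and S_{a,b} = Σ_{c=1}^{N} (S⁽¹⁾_{c,b} ⊗ S⁽²⁾_{a,c}),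 where f ⊗ g denotes the induced endomorphism of H1 ⊗ H2. Then the KT-relation holds on the tensor product: for all x ∈ H1 ⊗ H2 and all 1 ≤ a,b ≤ N, Σ_{c=1}^{N} K_{a,c} · Ψ(T_{c,b} x) = Σ_{c=1}^{N} Ψ(S_{a,c} x) · K_{c,b}. -/
open scoped TensorProduct

/-- Co-product property of boundary states (Proposition 3.1): if two boundary states
satisfy the KT-relation with the same `K`-matrix, then their product on the tensor
product quantum space satisfies the KT-relation as well. -/
theorem stmt_0 {H1 H2 A : Type*} [AddCommGroup H1] [Module ℂ H1]
    [AddCommGroup H2] [Module ℂ H2] [Ring A] [Algebra ℂ A]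
    (N : ℕ) (hN : 1 ≤ N)
    (Ψ1 : H1 →ₗ[ℂ] A) (Ψ2 : H2 →ₗ[ℂ] A)
    (T1 S1 : Fin N → Fin N → (H1 →ₗ[ℂ] H1))
    (T2 S2 : Fin N → Fin N → (H2 →ₗ[ℂ] H2))
    (K : Fin N → Fin N → A)
    (hKT1 : ∀ (h : H1) (a b : Fin N),
      ∑ c, K a c * Ψ1 ((T1 c b) h) = ∑ c, Ψ1 ((S1 a c) h) * K c b)
    (hKT2 : ∀ (h : H2) (a b : Fin N),
      ∑ c, K a c * Ψ2 ((T2 c b) h) = ∑ c, Ψ2 ((S2 a c) h) * K c b)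
    (Ψ : H1 ⊗[ℂ] H2 →ₗ[ℂ] A)
    (hΨ : ∀ (h1 : H1) (h2 : H2), Ψ (h1 ⊗ₜ[ℂ] h2) = Ψ2 h2 * Ψ1 h1)
    (T S : Fin N → Fin N → (H1 ⊗[ℂ] H2 →ₗ[ℂ] H1 ⊗[ℂ] H2))
    (hT : ∀ a b : Fin N, T a b = ∑ c, TensorProduct.map (T1 c b) (T2 a c))
    (hS : ∀ a b : Fin N, S a b = ∑ c, TensorProduct.map (S1 c b) (S2 a c)) :
    ∀ (x : H1 ⊗[ℂ] H2) (a b : Fin N),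
      ∑ c, K a c * Ψ ((T c b) x) = ∑ c, Ψ ((S a c) x) * K c b := by
  intro x a b
  induction x using TensorProduct.induction_on with
  | zero => simp
  | tmul h1 h2 =>
    simp only [hT, hS, LinearMap.sum_apply, TensorProduct.map_tmul, map_sum, hΨ,
      Finset.mul_sum, Finset.sum_mul]
    calc ∑ c, ∑ d, K a c * (Ψ2 ((T2 c d) h2) * Ψ1 ((T1 d b) h1))
        = ∑ d, (∑ c, K a c * Ψ2 ((T2 c d) h2)) * Ψ1 ((T1 d b) h1) := by
          rw [Finset.sum_comm]
          simp [Finset.sum_mul, mul_assoc]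
      _ = ∑ d, (∑ c, Ψ2 ((S2 a c) h2) * K c d) * Ψ1 ((T1 d b) h1) := by
          simp_rw [hKT2]
      _ = ∑ c, Ψ2 ((S2 a c) h2) * ∑ d, K c d * Ψ1 ((T1 d b) h1) := by
          simp only [Finset.sum_mul, Finset.mul_sum, mul_assoc]
          rw [Finset.sum_comm]
      _ = ∑ c, Ψ2 ((S2 a c) h2) * ∑ d, Ψ1 ((S1 c d) h1) * K d b := by
          simp_rw [hKT1]
      _ = ∑ c, ∑ d, Ψ2 ((S2 a d) h2) * Ψ1 ((S1 d c) h1) * K c b := by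
          rw [Finset.sum_comm]
          simp [Finset.mul_sum, mul_assoc]
  | add x y hx hy =>
    simp only [map_add, Finset.mul_sum, Finset.sum_mul, mul_add, add_mul,
      Finset.sum_add_distrib] at *
    rw [hx, hy]
end

section
/- Let H be a ℂ-vector space, A a unital associative ℂ-algebra, N ≥ 1, Ψ : H → A a ℂ-linear map, v₀ ∈ H, and let T, Ŝ be N×N matrices of ℂ-linear endomorphisms of H and K an N×N matrix over A satisfying the KT-relation: for all h ∈ H and 1 ≤ i,j ≤ N, Σ_{k=1}^{N} K_{i,k} · Ψ(T_{k,j} h) = Σ_{k=1}^{N} Ψ(Ŝ_{i,k} h) · K_{k,j}. Assume v₀ is a highest-weight vector for T and a lowest-weight vector for Ŝ in the following sense: T_{i,j} v₀ = 0 for i > j, Ŝ_{i,j} v₀ = 0 for i < j, T_{1,1} v₀ = λ₁ v₀ and Ŝ_{1,1} v₀ = μ₁ v₀ for scalars λ₁, μ₁ ∈ ℂ. If λ₁ = μ₁ ≠ 0, then K_{1,1} commutes with B := Ψ(v₀), i.e. K_{1,1} · B = B · K_{1,1}. -/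
/-- Vacuum-commutation part of Lemma C.1 (crossed KT-relation):
the (1,1) entry of the K-matrix commutes with the vacuum overlap B = Ψ(v₀). -/
theorem stmt_1 {H A : Type*} [AddCommGroup H] [Module ℂ H] [Ring A] [Algebra ℂ A]
    (N : ℕ) (hN : 1 ≤ N)
    (Ψ : H →ₗ[ℂ] A) (v₀ : H)
    (T Shat : Fin N → Fin N → (H →ₗ[ℂ] H))
    (K : Fin N → Fin N → A)
    (hKT : ∀ (h : H) (i j : Fin N),
      ∑ k, K i k * Ψ ((T k j) h) = ∑ k, Ψ ((Shat i k) h) * K k j)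
    (hT : ∀ i j : Fin N, j < i → (T i j) v₀ = 0)
    (hS : ∀ i j : Fin N, i < j → (Shat i j) v₀ = 0)
    (lam1 mu1 : ℂ)
    (hlam : (T ⟨0, by omega⟩ ⟨0, by omega⟩) v₀ = lam1 • v₀)
    (hmu : (Shat ⟨0, by omega⟩ ⟨0, by omega⟩) v₀ = mu1 • v₀)
    (heq : lam1 = mu1) (hne : lam1 ≠ 0) :
    K ⟨0, by omega⟩ ⟨0, by omega⟩ * Ψ v₀ = Ψ v₀ * K ⟨0, by omega⟩ ⟨0, by omega⟩ := by
  haveI : NeZero N := ⟨by omega⟩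
  set z : Fin N := ⟨0, by omega⟩
  have key := hKT v₀ z z
  have hL : ∑ k, K z k * Ψ ((T k z) v₀) = lam1 • (K z z * Ψ v₀) := by
    rw [Finset.sum_eq_single z]
    · rw [hlam, map_smul]; simp [mul_smul_comm]
    · intro k _ hk
      have : z < k := lt_of_le_of_ne (Fin.zero_le k) (Ne.symm hk)
      rw [hT k z this, map_zero, mul_zero]
    · simp
  have hR : ∑ k, Ψ ((Shat z k) v₀) * K k z = mu1 • (Ψ v₀ * K z z) := by
    rw [Finset.sum_eq_single z]
    · rw [hmu, map_smul]; simp [smul_mul_assoc]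
    · intro k _ hk
      have : z < k := lt_of_le_of_ne (Fin.zero_le k) (Ne.symm hk)
      rw [hS z k this, map_zero, zero_mul]
    · simp
  rw [hL, hR, heq] at key
  exact smul_right_injective A (heq ▸ hne) key
end

section
/- Let A be a unital associative ℂ-algebra, N ≥ 2, and u, v ∈ ℂ with u ≠ v, u ≠ −v, u ≠ v + 1 and u ≠ −(v+1). Suppose elements K_{i,j}(u), K_{i,j}(v) ∈ A (1 ≤ i,j ≤ N) satisfy the crossed reflection relation at (u,v), and suppose K_{1,1}(v) is invertible in A. Then for all 2 ≤ a,b ≤ N, K_{1,1}(u) commutes with the nested K-matrix entry K⁽²⁾_{a,b}(v) := K_{a,b}(v) − K_{a,1}(v)·K_{1,1}(v)⁻¹·K_{1,b}(v), i.e. K_{1,1}(u)·K⁽²⁾_{a,b}(v) = K⁽²⁾_{a,b}(v)·K_{1,1}(u). -/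
/-- Lemma C.2 (lem:KG): the (1,1) entry of a crossed K-matrix commutes with all entries
of the nested K-matrix K⁽²⁾. -/
theorem stmt_3 {A : Type*} [Ring A] [Algebra ℂ A]
    (N : ℕ) (hN : 2 ≤ N) (u v : ℂ)
    (h1 : u ≠ v) (h2 : u ≠ -v) (h3 : u ≠ v + 1) (h4 : u ≠ -(v + 1))
    (Ku Kv : Fin N → Fin N → A)
    (hrel : ∀ i j k l : Fin N,
      Ku i j * Kv k l - Kv k l * Ku i j =
        (u - v)⁻¹ • (Ku k j * Kv i l - Kv k j * Ku i l)
        - (u + v)⁻¹ • (Ku i k * Kv j l - Kv k i * Ku l j)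
        + (u ^ 2 - v ^ 2)⁻¹ • (Ku k i * Kv j l - Kv k i * Ku j l))
    (Kinv : A)
    (hKinv₁ : Kinv * Kv ⟨0, by omega⟩ ⟨0, by omega⟩ = 1)
    (hKinv₂ : Kv ⟨0, by omega⟩ ⟨0, by omega⟩ * Kinv = 1) :
    ∀ a b : Fin N, a ≠ (⟨0, by omega⟩ : Fin N) → b ≠ (⟨0, by omega⟩ : Fin N) →
      Ku ⟨0, by omega⟩ ⟨0, by omega⟩ *
          (Kv a b - Kv a ⟨0, by omega⟩ * Kinv * Kv ⟨0, by omega⟩ b) =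
        (Kv a b - Kv a ⟨0, by omega⟩ * Kinv * Kv ⟨0, by omega⟩ b) *
          Ku ⟨0, by omega⟩ ⟨0, by omega⟩ := by
  intro a b ha hb
  set z : Fin N := ⟨0, by omega⟩ with hz
  set α : ℂ := (u - v)⁻¹
  set β : ℂ := (u + v)⁻¹
  set γ : ℂ := (u ^ 2 - v ^ 2)⁻¹
  -- scalar nonvanishing
  have huv : u - v ≠ 0 := sub_ne_zero.mpr h1
  have huv' : u + v ≠ 0 := fun h => h2 (by linear_combination h)
  have hs : u ^ 2 - v ^ 2 ≠ 0 := by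
    have : u ^ 2 - v ^ 2 = (u - v) * (u + v) := by ring
    rw [this]; exact mul_ne_zero huv huv'
  have hc : (1 : ℂ) - (α - β + γ) ≠ 0 := by
    intro h
    have h3' : u - (v + 1) ≠ 0 := sub_ne_zero.mpr h3
    have h4' : u + (v + 1) ≠ 0 := fun h' => h4 (by linear_combination h')
    have hα : α * (u - v) = 1 := inv_mul_cancel₀ huv
    have hβ : β * (u + v) = 1 := inv_mul_cancel₀ huv'
    have hγ : γ * (u ^ 2 - v ^ 2) = 1 := inv_mul_cancel₀ hs
    have h'' : (u - (v + 1)) * (u + (v + 1)) * (u ^ 2 - v ^ 2) = 0 := by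
      linear_combination (u ^ 2 - v ^ 2) ^ 2 * h + (u + v) * (u ^ 2 - v ^ 2) * hα - (u - v) * (u ^ 2 - v ^ 2) * hβ + (u ^ 2 - v ^ 2) * hγ
    exact (mul_ne_zero (mul_ne_zero h3' h4') hs) h''
  -- commutation of Ku00 with Kv00
  have h00 := hrel z z z z
  have D0 : Ku z z * Kv z z - Kv z z * Ku z z = 0 := by
    set D := Ku z z * Kv z z - Kv z z * Ku z z with hD
    have h1' : ((1 : ℂ) - (α - β + γ)) • D = 0 := by
      rw [sub_smul, one_smul, add_smul, sub_smul, ← h00, sub_self]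
    calc D = ((1 : ℂ) - (α - β + γ))⁻¹ • (((1 : ℂ) - (α - β + γ)) • D) := by
            rw [smul_smul, inv_mul_cancel₀ hc, one_smul]
      _ = 0 := by rw [h1', smul_zero]
  have hKuKv : Ku z z * Kv z z = Kv z z * Ku z z := sub_eq_zero.mp D0
  have hL : ∀ x : A, Kinv * (Kv z z * x) = x := fun x => by
    rw [← mul_assoc, hKinv₁, one_mul]
  have hL' : ∀ x : A, Kv z z * (Kinv * x) = x := fun x => by
    rw [← mul_assoc, hKinv₂, one_mul]
  have hcomm : Ku z z * Kinv = Kinv * Ku z z := by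
    calc Ku z z * Kinv = Kinv * (Kv z z * (Ku z z * Kinv)) := (hL _).symm
      _ = Kinv * ((Kv z z * Ku z z) * Kinv) := by rw [mul_assoc]
      _ = Kinv * ((Ku z z * Kv z z) * Kinv) := by rw [hKuKv]
      _ = Kinv * (Ku z z * (Kv z z * Kinv)) := by rw [mul_assoc]
      _ = Kinv * Ku z z := by rw [hKinv₂, mul_one]
  have hswap : ∀ x : A, Kinv * (Ku z z * x) = Ku z z * (Kinv * x) := fun x => by
    rw [← mul_assoc, ← hcomm, mul_assoc]
  have key : Ku z z * Kv a b - Kv a b * Ku z z =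
      (Ku z z * Kv a z - Kv a z * Ku z z) * (Kinv * Kv z b)
      + (Kv a z * Kinv) * (Ku z z * Kv z b - Kv z b * Ku z z) := by
    rw [hrel z z a b, hrel z z a z, hrel z z z b]
    simp only [sub_mul, add_mul, mul_sub, mul_add, smul_mul_assoc, mul_smul_comm,
      smul_sub, mul_assoc, hL, hL', hswap]
    module
  have expand : Ku z z * (Kv a b - Kv a z * Kinv * Kv z b)
      - (Kv a b - Kv a z * Kinv * Kv z b) * Ku z z
      = (Ku z z * Kv a b - Kv a b * Ku z z)
        - ((Ku z z * Kv a z - Kv a z * Ku z z) * (Kinv * Kv z b)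
          + (Kv a z * Kinv) * (Ku z z * Kv z b - Kv z b * Ku z z))
        - Kv a z * (Ku z z * Kinv - Kinv * Ku z z) * Kv z b := by
    noncomm_ring
  have : Ku z z * (Kv a b - Kv a z * Kinv * Kv z b)
      - (Kv a b - Kv a z * Kinv * Kv z b) * Ku z z = 0 := by
    rw [expand, key, hcomm]
    simp
  exact sub_eq_zero.mp this
end

section
/- Let A be a unital associative ℂ-algebra, N ≥ 3, and u, v ∈ ℂ with u ≠ v, u ≠ −v and u ≠ v + 1. Suppose elements K_{i,j}(u), K_{i,j}(v) ∈ A (1 ≤ i,j ≤ N) satisfy the uncrossed reflection relation at (u,v), and suppose K_{N,1}(v) is invertible in A. Then for all a, b with 2 ≤ a,b ≤ N−1, K_{N,1}(u) commutes with the nested K-matrix entry K⁽²⁾_{a,b}(v) := K_{a,b}(v) − K_{a,1}(v)·K_{N,1}(v)⁻¹·K_{N,b}(v), i.e. K_{N,1}(u)·K⁽²⁾_{a,b}(v) = K⁽²⁾_{a,b}(v)·K_{N,1}(u). -/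
private lemma aux_ring {A : Type*} [Ring A] (X P Q Kinv E F G γ : A)
    (hinv1 : Kinv * E = 1) (hinv2 : E * Kinv = 1)
    (hXE : X * E = E * X)
    (hγ : ∀ y : A, γ * y = y * γ)
    (hP : X * P - P * X = γ * (F * E - P * X))
    (hQ : X * Q - Q * X = γ * (X * Q - E * G)) :
    X * (P * Kinv * Q) - (P * Kinv * Q) * X = γ * (F * Q - P * G) := by
  have hXK : X * Kinv = Kinv * X := by
    calc X * Kinv = Kinv * (E * X) * Kinv := by
          rw [← mul_assoc, hinv1, one_mul]
      _ = Kinv * X * (E * Kinv) := by rw [← hXE]; noncomm_ring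
      _ = Kinv * X := by rw [hinv2, mul_one]
  have hP' : X * P = P * X + γ * (F * E) - γ * (P * X) := by
    have h : X * P = P * X + (X * P - P * X) := by noncomm_ring
    rw [h, hP]; noncomm_ring
  have hQ'' : X * Q - γ * (X * Q) = Q * X - γ * (E * G) := by
    rw [mul_sub] at hQ
    exact sub_eq_sub_iff_sub_eq_sub.mp hQ
  have hcent : γ * (P * (Kinv * X) * Q) = P * Kinv * (γ * (X * Q)) := by
    calc γ * (P * (Kinv * X) * Q) = γ * ((P * Kinv) * (X * Q)) := by noncomm_ring
      _ = (γ * (P * Kinv)) * (X * Q) := by noncomm_ring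
      _ = ((P * Kinv) * γ) * (X * Q) := by rw [hγ]
      _ = P * Kinv * (γ * (X * Q)) := by noncomm_ring
  have hmain : X * (P * Kinv * Q) = P * Kinv * Q * X + γ * (F * Q) - γ * (P * G) := by
    calc X * (P * Kinv * Q)
        = (X * P) * (Kinv * Q) := by noncomm_ring
      _ = (P * X + γ * (F * E) - γ * (P * X)) * (Kinv * Q) := by rw [hP']
      _ = P * (X * Kinv) * Q + γ * (F * (E * Kinv) * Q)
            - γ * (P * (X * Kinv) * Q) := by noncomm_ring
      _ = P * (Kinv * X) * Q + γ * (F * Q) - γ * (P * (Kinv * X) * Q) := by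
            rw [hXK, hinv2, mul_one]
      _ = P * Kinv * (X * Q - γ * (X * Q)) + γ * (F * Q) := by
            rw [hcent, mul_sub]; noncomm_ring
      _ = P * Kinv * (Q * X - γ * (E * G)) + γ * (F * Q) := by rw [hQ'']
      _ = P * Kinv * Q * X - γ * (P * (Kinv * E) * G) + γ * (F * Q) := by
            rw [mul_sub]
            have : P * Kinv * (γ * (E * G)) = γ * (P * (Kinv * E) * G) := by
              calc P * Kinv * (γ * (E * G)) = ((P * Kinv) * γ) * (E * G) := by noncomm_ring
                _ = (γ * (P * Kinv)) * (E * G) := by rw [hγ]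
                _ = γ * (P * (Kinv * E) * G) := by noncomm_ring
            rw [this]; noncomm_ring
      _ = P * Kinv * Q * X + γ * (F * Q) - γ * (P * G) := by
            rw [hinv1, mul_one]; noncomm_ring
  rw [hmain]; noncomm_ring

/-- Lemma C.4 (lem:KG-1): the (N,1) entry of an uncrossed K-matrix commutes with all
entries of the nested K-matrix K⁽²⁾. -/
theorem stmt_6 {A : Type*} [Ring A] [Algebra ℂ A]
    (N : ℕ) (hN : 3 ≤ N) (u v : ℂ)
    (h1 : u ≠ v) (h2 : u ≠ -v) (h3 : u ≠ v + 1)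
    (Ku Kv : Fin N → Fin N → A)
    (hrel : ∀ i j k l : Fin N,
      Ku i j * Kv k l - Kv k l * Ku i j =
        (u - v)⁻¹ • (Ku k j * Kv i l - Kv k j * Ku i l)
        + (u + v)⁻¹ • (∑ n, ((if j = k then Ku i n * Kv n l else 0)
            - (if i = l then Kv k n * Ku n j else 0)))
        - (if i = j then
            (u ^ 2 - v ^ 2)⁻¹ • (∑ n, (Ku k n * Kv n l - Kv k n * Ku n l)) else 0))
    (Kinv : A)
    (hKinv₁ : Kinv * Kv ⟨N - 1, by omega⟩ ⟨0, by omega⟩ = 1)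
    (hKinv₂ : Kv ⟨N - 1, by omega⟩ ⟨0, by omega⟩ * Kinv = 1) :
    ∀ a b : Fin N, a ≠ (⟨0, by omega⟩ : Fin N) → a ≠ (⟨N - 1, by omega⟩ : Fin N) →
      b ≠ (⟨0, by omega⟩ : Fin N) → b ≠ (⟨N - 1, by omega⟩ : Fin N) →
      Ku ⟨N - 1, by omega⟩ ⟨0, by omega⟩ *
          (Kv a b - Kv a ⟨0, by omega⟩ * Kinv * Kv ⟨N - 1, by omega⟩ b) =
        (Kv a b - Kv a ⟨0, by omega⟩ * Kinv * Kv ⟨N - 1, by omega⟩ b) *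
          Ku ⟨N - 1, by omega⟩ ⟨0, by omega⟩ := by
  intro a b ha0 haN hb0 hbN
  have hNz : N - 1 ≠ 0 := by omega
  set e : Fin N := ⟨N - 1, by omega⟩ with he
  set z : Fin N := ⟨0, by omega⟩ with hz
  have hez : e ≠ z := by
    simp only [he, hz, ne_eq, Fin.mk.injEq]
    omega
  have hza : z ≠ a := Ne.symm ha0
  have heb : e ≠ b := Ne.symm hbN
  set X : A := Ku e z with hX
  set E : A := Kv e z with hE
  -- scalar facts
  have huv : u - v ≠ 0 := sub_ne_zero.mpr h1
  have h1c : (1 : ℂ) - (u - v)⁻¹ ≠ 0 := by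
    intro h
    have hc : (u - v)⁻¹ = 1 := by linear_combination -h
    have hone : u - v = 1 := inv_eq_one.mp hc
    exact h3 (by linear_combination hone)
  -- the four specialized relations
  have h00 := hrel e z e z
  simp only [if_neg hez, if_neg hez.symm, sub_zero, Finset.sum_const_zero, smul_zero,
    add_zero] at h00
  have hXE : X * E = E * X := by
    have hD : ((1 : ℂ) - (u - v)⁻¹) • (X * E - E * X) = 0 := by
      rw [sub_smul, one_smul, ← h00, sub_self]
    have hD2 := congrArg (fun x => ((1 : ℂ) - (u - v)⁻¹)⁻¹ • x) hD
    simp only [smul_smul, inv_mul_cancel₀ h1c, one_smul, smul_zero] at hD2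
    exact sub_eq_zero.mp hD2
  have hP0 := hrel e z a z
  simp only [if_neg hza, if_neg hez, sub_zero, Finset.sum_const_zero, smul_zero,
    add_zero] at hP0
  have hQ0 := hrel e z e b
  simp only [if_neg hez.symm, if_neg heb, if_neg hez, sub_zero, Finset.sum_const_zero, smul_zero,
    add_zero] at hQ0
  have hab := hrel e z a b
  simp only [if_neg hza, if_neg heb, if_neg hez, sub_zero, Finset.sum_const_zero, smul_zero,
    add_zero] at hab
  -- convert smul to multiplication by central element γ
  set γ : A := algebraMap ℂ A ((u - v)⁻¹) with hγdef
  have hγ : ∀ y : A, γ * y = y * γ := fun y => Algebra.commutes _ y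
  rw [Algebra.smul_def] at hP0 hQ0 hab
  have hmain := aux_ring X (Kv a z) (Kv e b) Kinv E (Ku a z) (Ku e b) γ
    hKinv₁ hKinv₂ hXE hγ hP0 hQ0
  have key : X * Kv a b - Kv a b * X
      = X * (Kv a z * Kinv * Kv e b) - (Kv a z * Kinv * Kv e b) * X :=
    hab.trans hmain.symm
  rw [mul_sub, sub_mul]
  exact sub_eq_sub_iff_sub_eq_sub.mp key
end

section
/- Let N ≥ 2, let λ₁, …, λ_N : ℂ → ℂ be functions satisfying the symmetry λ_k(w) = λ_{N+1−k}(−w) for all w ∈ ℂ and all 1 ≤ k ≤ N, and let t̄¹, …, t̄^{N−1} be finite multisets of complex numbers, with the convention t̄⁰ = t̄^N = ∅. Define f(x,y) = (x−y+1)/(x−y) for x ≠ y, and define the transfer-matrix eigenvalue τ(u | t̄) = Σ_{i=1}^{N} λ_i(u) · Π_{t ∈ t̄ⁱ} f(t,u) · Π_{t ∈ t̄^{i−1}} f(u,t). Define the achiral reflection of the Bethe roots by (π^a(t̄))^ν = { −t : t ∈ t̄^{N−ν} } for 1 ≤ ν ≤ N−1. Then for every u ∈ ℂ such that u ∉ t̄ⁱ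 and −u ∉ t̄ⁱ for all i, one has τ(−u | t̄) = τ(u | π^a(t̄)). -/
/-- `f(x,y) = (x−y+1)/(x−y)`. -/
noncomputable def ff (x y : ℂ) : ℂ := (x - y + 1) / (x - y)

lemma ff_neg_left (u s : ℂ) : ff (-u) s = ff (-s) u := by
  unfold ff; rw [show -u - s = -s - u from by ring]

lemma ff_neg_right (u s : ℂ) : ff s (-u) = ff u (-s) := by
  unfold ff; rw [show s - -u = u - -s from by ring]

/-- The transfer-matrix eigenvalue
`τ(u|t̄) = Σ_{i=1}^{N} λ_i(u) Π_{t∈t̄ⁱ} f(t,u) Π_{t∈t̄^{i−1}} f(u,t)`. -/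
noncomputable def tauEig (N : ℕ) (lam : ℕ → ℂ → ℂ) (t : ℕ → Multiset ℂ) (u : ℂ) : ℂ :=
  ∑ i ∈ Finset.Icc 1 N,
    lam i u * ((t i).map fun s => ff s u).prod * ((t (i - 1)).map fun s => ff u s).prod

/-- Achiral pair-structure identity (Section 3.4): for pseudo-vacuum eigenvalues with the
uncrossed symmetry `λ_k(w) = λ_{N+1−k}(−w)`, one has `τ(−u|t̄) = τ(u|π^a(t̄))`, where
`π^a` negates and reverses the families of Bethe roots. -/
theorem stmt_12 (N : ℕ) (hN : 2 ≤ N) (lam : ℕ → ℂ → ℂ)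
    (hsym : ∀ k : ℕ, 1 ≤ k → k ≤ N → ∀ w : ℂ, lam k w = lam (N + 1 - k) (-w))
    (t : ℕ → Multiset ℂ) (ht0 : t 0 = 0) (htN : t N = 0)
    (u : ℂ) (hu : ∀ i : ℕ, i ≤ N → u ∉ t i ∧ -u ∉ t i) :
    tauEig N lam t (-u) = tauEig N lam (fun ν => (t (N - ν)).map fun s => -s) u := by
  unfold tauEig
  refine Finset.sum_nbij' (fun i => N + 1 - i) (fun i => N + 1 - i) ?_ ?_ ?_ ?_ ?_
  · intro a ha; simp only [Finset.mem_Icc] at *; omega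
  · intro a ha; simp only [Finset.mem_Icc] at *; omega
  · intro a ha; simp only [Finset.mem_Icc] at ha; omega
  · intro a ha; simp only [Finset.mem_Icc] at ha; omega
  · intro i hi
    simp only [Finset.mem_Icc] at hi
    dsimp only
    have h1 : N - (N + 1 - i) = i - 1 := by omega
    have h2 : N - (N + 1 - i - 1) = i := by omega
    rw [h1, h2]
    have hlam : lam i (-u) = lam (N + 1 - i) u := by
      have := hsym i hi.1 hi.2 (-u); rwa [neg_neg] at this
    rw [hlam, Multiset.map_map, Multiset.map_map]
    have e1 : Multiset.map (fun s => ff s (-u)) (t i)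
        = Multiset.map ((fun s => ff u s) ∘ fun s => -s) (t i) :=
      Multiset.map_congr rfl fun s _ => ff_neg_right u s
    have e2 : Multiset.map (fun s => ff (-u) s) (t (i - 1))
        = Multiset.map ((fun s => ff s u) ∘ fun s => -s) (t (i - 1)) :=
      Multiset.map_congr rfl fun s _ => ff_neg_left u s
    rw [e1, e2]; ring
end

section
/- Let N ≥ 2, let λ₁, …, λ_N : ℂ → ℂ and λ̂₁, …, λ̂_N : ℂ → ℂ be functions satisfying the symmetry λ_k(w) = λ̂_k(−w) for all w ∈ ℂ and all 1 ≤ k ≤ N, and let t̄¹, …, t̄^{N−1} be finite multisets of complex numbers, with the convention t̄⁰ = t̄^N = ∅. Define f(x,y) = (x−y+1)/(x−y) for x ≠ y, the transfer eigenvalue τ(u | s̄) = Σ_{i=1}^{N} λ_i(u) · Π_{s ∈ s̄ⁱ} f(s,u) · Π_{s ∈ s̄^{i−1}} f(u,s) (for multisets s̄¹,…,s̄^{N−1} with s̄⁰ = s̄^N = ∅), and the crossed transfer eigenvalue τ̂(u | t̄) = Σ_{i=1}^{N} λ̂_i(u) · Π_{t ∈ t̄^{i−1}} f(t + (i−1),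 u) · Π_{t ∈ t̄ⁱ} f(u, t + i). Define the chiral reflection of the Bethe roots by (π^c(t̄))^ν = { −t − ν : t ∈ t̄^ν } for 1 ≤ ν ≤ N−1. Then for every u ∈ ℂ such that u + t + ν ≠ 0 for all 1 ≤ ν ≤ N−1 and all t ∈ t̄^ν, and u + t + ν − 1 ≠ 0 wherever the corresponding factor occurs, one has τ̂(−u | t̄) = τ(u | π^c(t̄)). -/
/-- The crossed transfer-matrix eigenvalue
`τ̂(u|t̄) = Σ_{i=1}^{N} λ̂_i(u) Π_{t∈t̄^{i−1}} f(t+(i−1),u) Π_{t∈t̄ⁱ} f(u,t+i)`. -/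
noncomputable def tauHatEig (N : ℕ) (lamHat : ℕ → ℂ → ℂ) (t : ℕ → Multiset ℂ) (u : ℂ) : ℂ :=
  ∑ i ∈ Finset.Icc 1 N,
    lamHat i u * ((t (i - 1)).map fun s => ff (s + ((i : ℂ) - 1)) u).prod *
      ((t i).map fun s => ff u (s + (i : ℂ))).prod

lemma ff_eq {x y z w : ℂ} (h : x - y = z - w) : ff x y = ff z w := by
  unfold ff; rw [h]

/-- Chiral pair-structure identity (Section 3.4): for pseudo-vacuum eigenvalues with the
crossed symmetry `λ_k(w) = λ̂_k(−w)`, one has `τ̂(−u|t̄) = τ(u|π^c(t̄))`, where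
`(π^c(t̄))^ν = −t̄^ν − ν`. -/
theorem stmt_13 (N : ℕ) (hN : 2 ≤ N) (lam lamHat : ℕ → ℂ → ℂ)
    (hsym : ∀ k : ℕ, 1 ≤ k → k ≤ N → ∀ w : ℂ, lam k w = lamHat k (-w))
    (t : ℕ → Multiset ℂ) (ht0 : t 0 = 0) (htN : t N = 0)
    (u : ℂ)
    (hu : ∀ ν : ℕ, 1 ≤ ν → ν ≤ N - 1 → ∀ s ∈ t ν,
      u + s + (ν : ℂ) ≠ 0 ∧ u + s + (ν : ℂ) - 1 ≠ 0) :
    tauHatEig N lamHat t (-u) =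
      tauEig N lam (fun ν => (t ν).map fun s => -s - (ν : ℂ)) u := by
  unfold tauHatEig tauEig
  refine Finset.sum_congr rfl fun i hi => ?_
  obtain ⟨h1, h2⟩ := Finset.mem_Icc.mp hi
  have hA : ((t (i - 1)).map fun s => ff (s + ((i : ℂ) - 1)) (-u)).prod
      = (((t (i - 1)).map fun s => -s - ((i - 1 : ℕ) : ℂ)).map fun s => ff u s).prod := by
    rw [Multiset.map_map]
    refine congrArg _ (Multiset.map_congr rfl fun s _ => ?_)
    simp only [Function.comp]
    apply ff_eq
    rw [Nat.cast_sub h1]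
    push_cast
    ring
  have hB : ((t i).map fun s => ff (-u) (s + (i : ℂ))).prod
      = (((t i).map fun s => -s - (i : ℂ)).map fun s => ff s u).prod := by
    rw [Multiset.map_map]
    refine congrArg _ (Multiset.map_congr rfl fun s _ => ?_)
    simp only [Function.comp]
    apply ff_eq
    ring
  rw [hsym i h1 h2, hA, hB]
  ring
end

section
/- Let N ≥ 1 and let U be a nonzero N×N matrix over ℂ satisfying U_{i,k}·U_{j,l} = U_{k,i}·U_{l,j} for all indices 1 ≤ i,j,k,l ≤ N. Then U is either symmetric or antisymmetric: either U_{k,i} = U_{i,k} for all i,k, or U_{k,i} = −U_{i,k} for all i,k. -/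
/-- Classification of the leading asymptotic term of a crossed K-matrix (Section 3.2):
a nonzero matrix U with `U_{i,k} U_{j,l} = U_{k,i} U_{l,j}` is symmetric or
antisymmetric. -/
theorem stmt_15 (N : ℕ) (hN : 1 ≤ N) (U : Matrix (Fin N) (Fin N) ℂ)
    (hU : U ≠ 0)
    (h : ∀ i j k l : Fin N, U i k * U j l = U k i * U l j) :
    (∀ i k : Fin N, U k i = U i k) ∨ (∀ i k : Fin N, U k i = -U i k) := by
  have ⟨a, b, hab⟩ : ∃ a b, U a b ≠ 0 := by
    by_contra hc
    push_neg at hc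
    exact hU (by ext i j; simpa using hc i j)
  have hsq : U a b * U a b = U b a * U b a := h a a b b
  have hcases : U b a = U a b ∨ U b a = -U a b := by
    have := mul_self_eq_mul_self_iff.mp hsq.symm
    tauto
  rcases hcases with hba | hba
  · left
    intro i k
    have hk := h a i b k
    rw [hba] at hk
    exact (mul_left_cancel₀ hab hk.symm)
  · right
    intro i k
    have hk := h a i b k
    rw [hba] at hk
    have h2 : U a b * U i k = U a b * (-U k i) := by linear_combination hk
    have h3 := mul_left_cancel₀ hab h2
    linear_combination h3
end
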